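/- arXiv:2410.03575 — 3 statements merged into one kernel-verified Lean document; each statement's English description precedes it below -/
import Mathlib

section
/- Let A ∈ ℂ^{n×n}, B ∈ ℂ^{d×d}, E ∈ ℂ^{n×d}. Then L_exp(2A, 2B, 2E) = exp(A) · L_exp(A, B, E) + L_exp(A, B, E) · exp(B). -/
/-!
Since `fromBlocks (2A) (2E) 0 (2B) = 2M` with `M = fromBlocks A E 0 B`, we have
`exp (2M) = exp M * exp M`, whose `(1,2)` block is `(exp M)₁₁ L + L (exp M)₂₂` with
`L = L_exp(A, B, E)`. The diagonal blocks of `exp M` are `exp A` and `exp B`, because the powers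
of a block upper-triangular matrix have the powers of its diagonal blocks on the diagonal.
-/

noncomputable def Lexp {n d : ℕ} (A : Matrix (Fin n) (Fin n) ℂ) (B : Matrix (Fin d) (Fin d) ℂ)
    (E : Matrix (Fin n) (Fin d) ℂ) : Matrix (Fin n) (Fin d) ℂ :=
  (NormedSpace.exp (Matrix.fromBlocks A E 0 B)).toBlocks₁₂

open NormedSpace Matrix

variable {ι l m n o R α 𝔸 : Type*}

section HasSum

variable [AddCommMonoid R] [TopologicalSpace R] {f : ι → Matrix (m ⊕ n) (l ⊕ o) R}
  {a : Matrix (m ⊕ n) (l ⊕ o) R}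

theorem HasSum.matrix_toBlocks₁₁ (hf : HasSum f a) :
    HasSum (fun x => (f x).toBlocks₁₁) a.toBlocks₁₁ :=
  Pi.hasSum.2 fun _ => Pi.hasSum.2 fun _ => Pi.hasSum.1 (Pi.hasSum.1 hf _) _

theorem HasSum.matrix_toBlocks₂₂ (hf : HasSum f a) :
    HasSum (fun x => (f x).toBlocks₂₂) a.toBlocks₂₂ :=
  Pi.hasSum.2 fun _ => Pi.hasSum.2 fun _ => Pi.hasSum.1 (Pi.hasSum.1 hf _) _

end HasSum

namespace Matrix

theorem toBlocks₁₁_smul [SMul R α] (c : R) (M : Matrix (m ⊕ n) (l ⊕ o) α) :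
    (c • M).toBlocks₁₁ = c • M.toBlocks₁₁ :=
  rfl

theorem toBlocks₂₂_smul [SMul R α] (c : R) (M : Matrix (m ⊕ n) (l ⊕ o) α) :
    (c • M).toBlocks₂₂ = c • M.toBlocks₂₂ :=
  rfl

theorem toBlocks₁₂_mul [Fintype m] [Fintype n] [NonUnitalNonAssocSemiring R]
    (M : Matrix (l ⊕ o) (m ⊕ n) R) (N : Matrix (m ⊕ n) (l ⊕ o) R) :
    (M * N).toBlocks₁₂ = M.toBlocks₁₁ * N.toBlocks₁₂ + M.toBlocks₁₂ * N.toBlocks₂₂ := by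
  ext i j
  simp [toBlocks₁₂, toBlocks₁₁, toBlocks₂₂, mul_apply, Fintype.sum_sum_type]

section BlockTriangular

variable [Fintype m] [Fintype n] [DecidableEq m] [DecidableEq n]

section Semiring

variable [Semiring R] (A : Matrix m m R) (B : Matrix n n R) (C : Matrix m n R) (k : ℕ)

theorem fromBlocks_zero₂₁_pow : ∃ F, fromBlocks A C 0 B ^ k = fromBlocks (A ^ k) F 0 (B ^ k) := by
  induction k with
  | zero => exact ⟨0, by simp⟩
  | succ k ih =>
    obtain ⟨F, hF⟩ := ih
    exact ⟨A ^ k * C + F * B, by simp [pow_succ, hF, fromBlocks_multiply]⟩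

theorem toBlocks₁₁_fromBlocks_zero₂₁_pow : (fromBlocks A C 0 B ^ k).toBlocks₁₁ = A ^ k := by
  obtain ⟨F, hF⟩ := fromBlocks_zero₂₁_pow A B C k
  rw [hF, toBlocks_fromBlocks₁₁]

theorem toBlocks₂₂_fromBlocks_zero₂₁_pow : (fromBlocks A C 0 B ^ k).toBlocks₂₂ = B ^ k := by
  obtain ⟨F, hF⟩ := fromBlocks_zero₂₁_pow A B C k
  rw [hF, toBlocks_fromBlocks₂₂]

end Semiring

variable [NormedRing 𝔸] [NormedAlgebra ℚ 𝔸] [CompleteSpace 𝔸]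

-- The operator norm induces the product uniformity only up to unfolding, so instance search
-- does not find completeness and it is supplied by hand.
theorem exp_series_hasSum_exp {p : Type*} [Fintype p] [DecidableEq p] (X : Matrix p p 𝔸) :
    HasSum (fun k => (k.factorial⁻¹ : ℚ) • X ^ k) (exp X) :=
  letI := Matrix.linftyOpNormedRing (n := p) (α := 𝔸)
  letI := Matrix.linftyOpNormedAlgebra (n := p) (α := 𝔸) (R := ℚ)
  @exp_series_hasSum_exp' ℚ _ _ _ _ _ _ (instCompleteSpace p p 𝔸) X

variable (A : Matrix m m 𝔸) (B : Matrix n n 𝔸) (C : Matrix m n 𝔸)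

theorem toBlocks₁₁_exp_fromBlocks_zero₂₁ : (exp (fromBlocks A C 0 B)).toBlocks₁₁ = exp A := by
  have h := (exp_series_hasSum_exp (fromBlocks A C 0 B)).matrix_toBlocks₁₁
  simp only [toBlocks₁₁_smul, toBlocks₁₁_fromBlocks_zero₂₁_pow] at h
  exact h.unique (exp_series_hasSum_exp A)

theorem toBlocks₂₂_exp_fromBlocks_zero₂₁ : (exp (fromBlocks A C 0 B)).toBlocks₂₂ = exp B := by
  have h := (exp_series_hasSum_exp (fromBlocks A C 0 B)).matrix_toBlocks₂₂
  simp only [toBlocks₂₂_smul, toBlocks₂₂_fromBlocks_zero₂₁_pow] at h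
  exact h.unique (exp_series_hasSum_exp B)

end BlockTriangular

end Matrix

/-- The product (doubling) rule:
`L_exp(2A, 2B, 2E) = exp(A) ⬝ L_exp(A, B, E) + L_exp(A, B, E) ⬝ exp(B)`. -/
theorem Lexp_double {n d : ℕ} (A : Matrix (Fin n) (Fin n) ℂ) (B : Matrix (Fin d) (Fin d) ℂ)
    (E : Matrix (Fin n) (Fin d) ℂ) :
    Lexp ((2 : ℂ) • A) ((2 : ℂ) • B) ((2 : ℂ) • E) =
      NormedSpace.exp A * Lexp A B E + Lexp A B E * NormedSpace.exp B := by
  set M := fromBlocks A E 0 B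
  have h2M : fromBlocks ((2 : ℂ) • A) ((2 : ℂ) • E) 0 ((2 : ℂ) • B) = M + M := by
    rw [← two_smul ℂ M, fromBlocks_smul, smul_zero]
  calc Lexp ((2 : ℂ) • A) ((2 : ℂ) • B) ((2 : ℂ) • E) = (exp M * exp M).toBlocks₁₂ := by
        rw [Lexp, h2M, Matrix.exp_add_of_commute M M (Commute.refl M)]
    _ = exp A * Lexp A B E + Lexp A B E * exp B := by
        rw [toBlocks₁₂_mul, toBlocks₁₁_exp_fromBlocks_zero₂₁, toBlocks₂₂_exp_fromBlocks_zero₂₁]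
        rfl
end

section
/- Let (b_k)_{k≥0} be a sequence of complex numbers such that Σ_{k≥1} k·|b_k|·x^{k−1} converges for every real x ≥ 0 (so f(z) = Σ b_k z^k is entire). Let A ∈ ℂ^{n×n}, B ∈ ℂ^{d×d}, E ∈ ℂ^{n×d}, set M = [[A, E],[0, B]], and let D be the (1,2) block of Σ_{k≥0} b_k M^k (the series converges absolutely). Then ‖D‖ ≤ ‖E‖ · Σ_{k≥1} k·|b_k|·(max(‖A‖, ‖B‖))^{k−1}, where ‖·‖ is the L∞ operator norm on matrices. In particular, the bound is independent of E except through the factor ‖E‖, and depends on A and B only through max(‖A‖,‖B‖). -/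
/-!
Writing `M = [[A, E], [0, B]]`, the `(1,2)` block of `M ^ k` is `Σ_{i<k} A^i E B^(k-1-i)`, a sum of
`k` terms each of norm at most `‖E‖ m^(k-1)` with `m = max ‖A‖ ‖B‖`. Since taking the `(1,2)` block
is continuous and additive it commutes with the series, and the bound follows termwise.
-/

attribute [local instance] Matrix.linftyOpNormedAddCommGroup Matrix.linftyOpNormedSpace
  Matrix.linftyOpNormSMulClass

open Finset

theorem summable_norm_mul_pow_of_summable_nat_mul {E : Type*} [SeminormedAddCommGroup E]
    {b : ℕ → E} {x : ℝ} (hx : 0 ≤ x)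
    (hb : Summable fun k : ℕ => (k : ℝ) * ‖b k‖ * x ^ (k - 1)) :
    Summable fun k : ℕ => ‖b k‖ * x ^ k := by
  refine (summable_nat_add_iff 1).1 <|
    (((summable_nat_add_iff 1).2 hb).mul_left x).of_nonneg_of_le (fun k => by positivity)
      fun k => ?_
  have hk : (1 : ℝ) ≤ (k + 1 : ℕ) := by exact_mod_cast Nat.le_add_left 1 k
  calc ‖b (k + 1)‖ * x ^ (k + 1) = x * (1 * ‖b (k + 1)‖ * x ^ (k + 1 - 1)) := by
        rw [Nat.add_sub_cancel, pow_succ]; ring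
    _ ≤ x * (((k + 1 : ℕ) : ℝ) * ‖b (k + 1)‖ * x ^ (k + 1 - 1)) := by gcongr

theorem HasSum.matrix_toBlocks₁₂ {X l m n o R : Type*} [AddCommMonoid R] [TopologicalSpace R]
    {f : X → Matrix (n ⊕ o) (l ⊕ m) R} {a : Matrix (n ⊕ o) (l ⊕ m) R} (hf : HasSum f a) :
    HasSum (fun x => (f x).toBlocks₁₂) a.toBlocks₁₂ :=
  hf.map (⟨⟨Matrix.toBlocks₁₂, rfl⟩, fun _ _ => rfl⟩ : Matrix (n ⊕ o) (l ⊕ m) R →+ Matrix n m R)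
    (continuous_id.matrix_submatrix _ _)

namespace Matrix

variable {m n α 𝕜 : Type*}

theorem fromBlocks_zero₂₁_pow_s11 [Fintype n] [Fintype m] [DecidableEq n] [DecidableEq m]
    [Semiring α] (A : Matrix n n α) (E : Matrix n m α) (B : Matrix m m α) (k : ℕ) :
    fromBlocks A E 0 B ^ k =
      fromBlocks (A ^ k) (∑ i ∈ range k, A ^ i * E * B ^ (k - 1 - i)) 0 (B ^ k) := by
  induction k with
  | zero => simp
  | succ k ih =>
    rw [pow_succ', ih, fromBlocks_multiply]
    simp only [Matrix.mul_zero, add_zero, Matrix.zero_mul, zero_add, ← pow_succ']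
    congr 1
    rw [sum_range_succ', Matrix.mul_sum]
    congr 1
    · refine sum_congr rfl fun i _ => ?_
      rw [show k + 1 - 1 - (i + 1) = k - 1 - i by omega, pow_succ', Matrix.mul_assoc,
        Matrix.mul_assoc, Matrix.mul_assoc]
    · simp

section Norm

variable [Fintype n] [Fintype m] [DecidableEq n] [DecidableEq m] [NormedRing α] [NormOneClass α]

theorem linfty_opNorm_one_le : ‖(1 : Matrix n n α)‖ ≤ 1 := by
  rw [← diagonal_one, linfty_opNorm_diagonal]
  exact (pi_norm_le_iff_of_nonneg zero_le_one).2 fun _ => norm_one.le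

theorem linfty_opNorm_pow_le (A : Matrix n n α) (k : ℕ) : ‖A ^ k‖ ≤ ‖A‖ ^ k := by
  induction k with
  | zero => simpa using linfty_opNorm_one_le
  | succ k ih =>
    rw [pow_succ, pow_succ]
    exact (linfty_opNorm_mul _ _).trans (by gcongr)

theorem linfty_opNorm_toBlocks₁₂_fromBlocks_zero₂₁_pow_le (A : Matrix n n α)
    (E : Matrix n m α) (B : Matrix m m α) (k : ℕ) :
    ‖(fromBlocks A E 0 B ^ k).toBlocks₁₂‖ ≤ k * ‖E‖ * max ‖A‖ ‖B‖ ^ (k - 1) := by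
  set r := max ‖A‖ ‖B‖
  have hterm : ∀ i ∈ range k, ‖A ^ i * E * B ^ (k - 1 - i)‖ ≤ ‖E‖ * r ^ (k - 1) := by
    intro i hi
    have hik : i + (k - 1 - i) = k - 1 := by have := mem_range.1 hi; omega
    calc ‖A ^ i * E * B ^ (k - 1 - i)‖ ≤ ‖A‖ ^ i * ‖E‖ * ‖B‖ ^ (k - 1 - i) := by
          refine (linfty_opNorm_mul _ _).trans ?_
          gcongr
          · exact (linfty_opNorm_mul _ _).trans (by gcongr; exact linfty_opNorm_pow_le _ _)
          · exact linfty_opNorm_pow_le _ _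
      _ ≤ r ^ i * ‖E‖ * r ^ (k - 1 - i) := by gcongr <;> simp [r]
      _ = ‖E‖ * r ^ (k - 1) := by rw [mul_right_comm, ← pow_add, hik, mul_comm]
  rw [fromBlocks_zero₂₁_pow_s11, toBlocks_fromBlocks₁₂]
  calc ‖∑ i ∈ range k, A ^ i * E * B ^ (k - 1 - i)‖
      ≤ ∑ i ∈ range k, ‖A ^ i * E * B ^ (k - 1 - i)‖ := norm_sum_le _ _
    _ ≤ #(range k) • (‖E‖ * r ^ (k - 1)) := sum_le_card_nsmul _ _ _ hterm
    _ = k * ‖E‖ * r ^ (k - 1) := by simp [mul_assoc]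

end Norm

theorem summable_smul_pow [Fintype n] [DecidableEq n] [RCLike 𝕜] {b : ℕ → 𝕜} (M : Matrix n n 𝕜)
    (hb : Summable fun k : ℕ => ‖b k‖ * ‖M‖ ^ k) :
    Summable fun k : ℕ => b k • M ^ k :=
  Summable.of_norm_bounded hb fun k => by
    rw [norm_smul]
    gcongr
    exact linfty_opNorm_pow_le M k

end Matrix

/-- Norm estimate for the `(1,2)` block of an entire matrix function of the block
triangular matrix `M = [[A, E],[0, B]]`: if `Σ k·|b_k|·x^(k−1)` converges for every
`x ≥ 0`, then `f(M) = Σ b_k M^k` converges and its `(1,2)` block `D` satisfies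
`‖D‖ ≤ ‖E‖ ⬝ Σ_{k≥1} k·|b_k|·max(‖A‖,‖B‖)^(k−1)` in the `L∞` operator norm. -/
theorem norm_toBlocks₁₂_tsum_le {n d : ℕ} (b : ℕ → ℂ)
    (hb : ∀ x : ℝ, 0 ≤ x → Summable fun k : ℕ => (k : ℝ) * ‖b k‖ * x ^ (k - 1))
    (A : Matrix (Fin n) (Fin n) ℂ) (B : Matrix (Fin d) (Fin d) ℂ)
    (E : Matrix (Fin n) (Fin d) ℂ) :
    Summable (fun k : ℕ => b k • Matrix.fromBlocks A E 0 B ^ k) ∧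
      ‖(∑' k : ℕ, b k • Matrix.fromBlocks A E 0 B ^ k).toBlocks₁₂‖ ≤
        ‖E‖ * ∑' k : ℕ, (k : ℝ) * ‖b k‖ * max ‖A‖ ‖B‖ ^ (k - 1) := by
  set M := Matrix.fromBlocks A E 0 B
  have hsum : Summable fun k : ℕ => b k • M ^ k :=
    M.summable_smul_pow <|
      summable_norm_mul_pow_of_summable_nat_mul (norm_nonneg M) (hb _ (norm_nonneg M))
  have hmax : 0 ≤ max ‖A‖ ‖B‖ := (norm_nonneg A).trans (le_max_left _ _)
  refine ⟨hsum, hsum.hasSum.matrix_toBlocks₁₂.norm_le_of_bounded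
    ((hb _ hmax).hasSum.mul_left ‖E‖) fun k => ?_⟩
  calc ‖(b k • M ^ k).toBlocks₁₂‖ = ‖b k‖ * ‖(M ^ k).toBlocks₁₂‖ :=
        norm_smul (b k) (M ^ k).toBlocks₁₂
    _ ≤ ‖b k‖ * (k * ‖E‖ * max ‖A‖ ‖B‖ ^ (k - 1)) := by
        gcongr
        exact Matrix.linfty_opNorm_toBlocks₁₂_fromBlocks_zero₂₁_pow_le A E B k
    _ = ‖E‖ * (k * ‖b k‖ * max ‖A‖ ‖B‖ ^ (k - 1)) := by ring
end

section
/- Let A ∈ ℂ^{n×n}. The matrix exponential exp : ℂ^{n×n} → ℂ^{n×n} is Fréchet differentiable at A, and its Fréchet derivative at A is the linear map E ↦ L_exp(A, A, E); that is, HasFDerivAt exp (E ↦ L_exp(A, A, E)) A, where the map E ↦ L_exp(A, A, E) is ℂ-linear and continuous. -/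
attribute [local instance] Matrix.linftyOpNormedRing Matrix.linftyOpNormedAlgebra

/-!
Conjugating by the unipotent block matrix `[[1, c], [0, 1]]` gives
`exp [[X, c (Y - X)], [0, Y]] = [[exp X, c (exp Y - exp X)], [0, exp Y]]`, so the `(1,2)` block of
`exp [[A, E], [0, A + t E]]` is the difference quotient `(exp (A + t E) - exp A) / t`.
As `t → 0` the left side tends to `L_exp(A, A, E)` by continuity of `exp`, and the right side to
the derivative of `exp` at `A` in the direction `E`, which exists because `exp` is analytic.
-/

open NormedSpace Matrix Filter Topology

namespace Matrix

variable {m n : Type*} [Fintype m] [DecidableEq m] [Fintype n] [DecidableEq n]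

section Ring

variable {R : Type*}

def fromBlocksDiagonalRingHom [Semiring R] :
    Matrix m m R × Matrix n n R →+* Matrix (m ⊕ n) (m ⊕ n) R where
  toFun p := fromBlocks p.1 0 0 p.2
  map_one' := fromBlocks_one
  map_mul' p q := by simp [fromBlocks_multiply]
  map_zero' := fromBlocks_zero
  map_add' p q := by simp [fromBlocks_add]

variable [CommRing R]

def fromBlocksUnipotent (c : R) : (Matrix (m ⊕ m) (m ⊕ m) R)ˣ where
  val := fromBlocks 1 (c • 1) 0 1
  inv := fromBlocks 1 (-c • 1) 0 1
  val_inv := by simp [fromBlocks_multiply, fromBlocks_one]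
  inv_val := by simp [fromBlocks_multiply, fromBlocks_one]

theorem fromBlocks_smul_sub_eq_conj (X Y : Matrix m m R) (c : R) :
    fromBlocks X (c • (Y - X)) 0 Y =
      (fromBlocksUnipotent c).val * fromBlocks X 0 0 Y * (fromBlocksUnipotent c)⁻¹.val := by
  simp [fromBlocksUnipotent, fromBlocks_multiply, sub_eq_neg_add]

end Ring

variable {𝕂 : Type*} [RCLike 𝕂]

-- Yields completeness in the `L∞` operator norm (`FiniteDimensional.proper_rclike` is no instance).
instance : ProperSpace (Matrix m m 𝕂) := FiniteDimensional.proper_rclike 𝕂 _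

theorem exp_fromBlocks_zero_zero (X : Matrix m m 𝕂) (Y : Matrix n n 𝕂) :
    exp (fromBlocks X 0 0 Y) = fromBlocks (exp X) 0 0 (exp Y) := by
  have hcont : Continuous (fromBlocksDiagonalRingHom (R := 𝕂) (m := m) (n := n)) :=
    continuous_fst.matrix_fromBlocks continuous_const continuous_const continuous_snd
  have hprod : exp (X, Y) = (exp X, exp Y) := Prod.ext (Prod.fst_exp _) (Prod.snd_exp _)
  exact (map_exp _ hcont (X, Y)).symm.trans (congrArg fromBlocksDiagonalRingHom hprod)

theorem exp_fromBlocks_smul_sub (X Y : Matrix m m 𝕂) (c : 𝕂) :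
    exp (fromBlocks X (c • (Y - X)) 0 Y) = fromBlocks (exp X) (c • (exp Y - exp X)) 0 (exp Y) := by
  rw [fromBlocks_smul_sub_eq_conj, exp_units_conj, exp_fromBlocks_zero_zero,
    ← fromBlocks_smul_sub_eq_conj]

theorem toBlocks₁₂_exp_fromBlocks_add_smul (A E : Matrix m m 𝕂) {t : 𝕂} (ht : t ≠ 0) :
    (exp (fromBlocks A E 0 (A + t • E))).toBlocks₁₂ = t⁻¹ • (exp (A + t • E) - exp A) := by
  have h := exp_fromBlocks_smul_sub A (A + t • E) t⁻¹
  rw [add_sub_cancel_left, inv_smul_smul₀ ht] at h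
  rw [h, toBlocks_fromBlocks₁₂]

theorem toBlocks₁₂_exp_fromBlocks_of_hasFDerivAt {A : Matrix m m 𝕂}
    {D : Matrix m m 𝕂 →L[𝕂] Matrix m m 𝕂} (hD : HasFDerivAt exp D A) (E : Matrix m m 𝕂) :
    (exp (fromBlocks A E 0 A)).toBlocks₁₂ = D E := by
  have hline : HasDerivAt (fun t : 𝕂 => A + t • E) E 0 :=
    (((hasDerivAt_id' 0).smul_const E).const_add A).congr_deriv (one_smul 𝕂 E)
  have hslope : Tendsto (fun t : 𝕂 => t⁻¹ • (exp (A + t • E) - exp A)) (𝓝[≠] 0) (𝓝 (D E)) := by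
    have h := (hD.comp_hasDerivAt_of_eq 0 hline (by simp)).tendsto_slope_zero
    simp only [zero_add, zero_smul, add_zero, Function.comp_def] at h
    exact h
  have hcont : Continuous fun t : 𝕂 => (exp (fromBlocks A E 0 (A + t • E))).toBlocks₁₂ :=
    (exp_continuous.comp (continuous_const.matrix_fromBlocks continuous_const continuous_const
      (continuous_const.add (continuous_id.smul continuous_const)))).matrix_submatrix _ _
  refine tendsto_nhds_unique ((hcont.tendsto' 0 _ (by simp)).mono_left nhdsWithin_le_nhds
    |>.congr' ?_) hslope
  filter_upwards [self_mem_nhdsWithin] with t ht using toBlocks₁₂_exp_fromBlocks_add_smul A E ht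

end Matrix

/-- The matrix exponential is Fréchet differentiable at `A`, with Fréchet derivative
the continuous `ℂ`-linear map `E ↦ L_exp(A, A, E)`. -/
theorem hasFDerivAt_exp_Lexp {n : ℕ} (A : Matrix (Fin n) (Fin n) ℂ) :
    ∃ f : Matrix (Fin n) (Fin n) ℂ →L[ℂ] Matrix (Fin n) (Fin n) ℂ,
      (∀ E : Matrix (Fin n) (Fin n) ℂ, f E = Lexp A A E) ∧
      HasFDerivAt NormedSpace.exp f A := by
  have hexp : HasFDerivAt exp (fderiv ℂ exp A) A := (exp_analytic A).differentiableAt.hasFDerivAt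
  exact ⟨_, fun E => (toBlocks₁₂_exp_fromBlocks_of_hasFDerivAt hexp E).symm, hexp⟩
end
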